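/- arXiv:1507.03063 — 3 statements merged into one kernel-verified Lean document; each statement's English description precedes it below -/
import Mathlib

section
/- For every k > 0, Φ(√k · (1.5 − 9) / √(100 + 1)) > Φ(√k · (2 − 9) / √(20 + 1)). Consequently, in the two-agent experiment where agent 1 chooses between actions with (mean, variance) equal to (1.5, 100) or (2, 20), agent 2 plays (9, 1), and each agent's score is the sample mean of k independent Gaussian outcomes with the chosen mean and variance, agent 1's probability of achieving the higher score is strictly larger under the action (1.5, 100) than under its natural action (2, 20). -/
/-!
The difference of the two independent scores is Gaussian with mean `m₁ - m₂` and variance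
`(σ₁² + σ₂²)/k`, so agent 1 wins with probability `Φ(√k (m₁ - m₂)/√(σ₁² + σ₂²))`. Behind by
`7` or `7.5`, agent 1 gains more from the extra noise than it loses in mean:
`7.5/√101 < 7/√21`.
-/

open MeasureTheory ProbabilityTheory Real

/-- The cumulative distribution function `Φ` of the standard normal distribution `N(0,1)`. -/
noncomputable def stdNormalCDF (x : ℝ) : ℝ := cdf (gaussianReal 0 1) x

open Set
open scoped ENNReal NNReal

lemma stdNormalCDF_strictMono : StrictMono stdNormalCDF := by
  intro x y hxy
  have hIoc : gaussianReal 0 1 (Ioc x y) ≠ 0 := fun h ↦ by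
    simpa [hxy.not_ge] using gaussianReal_absolutelyContinuous' 0 one_ne_zero h
  rw [← measure_cdf (μ := gaussianReal 0 1), StieltjesFunction.measure_Ioc, Ne,
    ENNReal.ofReal_eq_zero, not_le, sub_pos] at hIoc
  exact hIoc

lemma gaussianReal_Ioi_zero (m : ℝ) {v : ℝ≥0} (hv : v ≠ 0) :
    gaussianReal m v (Ioi 0) = ENNReal.ofReal (stdNormalCDF (m / √v)) := by
  have hsv : 0 < √(v : ℝ) := sqrt_pos.2 (by positivity)
  have hlaw : HasLaw (fun x ↦ m - √v * x) (gaussianReal m v) (gaussianReal 0 1) := by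
    convert gaussianReal_const_sub (gaussianReal_const_mul HasLaw.id √v) m using 2
    · rfl
    · simp
    · ext; simp
  have hset : {x : ℝ | 0 < m - √v * x} = Iio (m / √v) := by
    ext x; simp [lt_div_iff₀ hsv, mul_comm]
  have := nullSingletonClass_gaussianReal (μ := 0) one_ne_zero
  rw [stdNormalCDF, ofReal_cdf, ← measure_congr Iio_ae_eq_Iic, ← hset,
    hlaw.measure_eq (p := (0 < ·)) measurableSet_Ioi]
  rfl

lemma map_sub_eq_gaussianReal_of_indepFun {Ω : Type*} {mΩ : MeasurableSpace Ω} {P : Measure Ω}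
    {m₁ m₂ : ℝ} {v₁ v₂ : ℝ≥0} {X Y : Ω → ℝ} (hXY : IndepFun X Y P)
    (hX : P.map X = gaussianReal m₁ v₁) (hY : P.map Y = gaussianReal m₂ v₂) :
    P.map (X - Y) = gaussianReal (m₁ - m₂) (v₁ + v₂) := by
  have hYm : AEMeasurable Y P := .of_map_ne_zero (by simp [hY, NeZero.ne])
  have hnegY : P.map (-Y) = gaussianReal (-m₂) v₂ := (gaussianReal_neg ⟨hYm, hY⟩).map_eq
  rw [sub_eq_add_neg, sub_eq_add_neg]
  exact gaussianReal_add_gaussianReal_of_indepFun (hXY.comp measurable_id measurable_neg) hX hnegY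

lemma measure_lt_eq_stdNormalCDF_of_indepFun {Ω : Type*} {mΩ : MeasurableSpace Ω}
    {P : Measure Ω} {m₁ m₂ : ℝ} {v₁ v₂ : ℝ≥0} {X Y : Ω → ℝ} (hXY : IndepFun X Y P)
    (hX : P.map X = gaussianReal m₁ v₁) (hY : P.map Y = gaussianReal m₂ v₂) (hv : v₁ + v₂ ≠ 0) :
    P {ω | Y ω < X ω} = ENNReal.ofReal (stdNormalCDF ((m₁ - m₂) / √(v₁ + v₂ : ℝ≥0))) := by
  have hlaw := map_sub_eq_gaussianReal_of_indepFun hXY hX hY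
  have hsub : HasLaw (X - Y) (gaussianReal (m₁ - m₂) (v₁ + v₂)) P :=
    ⟨.of_map_ne_zero (by simp [hlaw, NeZero.ne]), hlaw⟩
  rw [← gaussianReal_Ioi_zero _ hv]
  convert hsub.measure_eq (p := (0 < ·)) measurableSet_Ioi using 2
  · ext; simp [sub_pos]
  · rfl

lemma div_sqrt_add_toNNReal_div (m : ℝ) {k a b : ℝ} (hk : 0 < k) (ha : 0 ≤ a) (hb : 0 ≤ b) :
    m / √((a / k).toNNReal + (b / k).toNNReal : ℝ≥0) = √k * m / √(a + b) := by
  rw [NNReal.coe_add, Real.coe_toNNReal _ (by positivity), Real.coe_toNNReal _ (by positivity),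
    ← add_div, sqrt_div' _ hk.le, div_div_eq_mul_div, mul_comm]

theorem stmt_1_general (k : ℝ) (hk : 0 < k)
    {Ω : Type*} [MeasurableSpace Ω] (P : Measure Ω)
    (X X' Y : Ω → ℝ)
    (hXY : IndepFun X Y P) (hX'Y : IndepFun X' Y P)
    (hXd : P.map X = gaussianReal 1.5 (100 / k).toNNReal)
    (hX'd : P.map X' = gaussianReal 2 (20 / k).toNNReal)
    (hYd : P.map Y = gaussianReal 9 (1 / k).toNNReal) :
    stdNormalCDF (Real.sqrt k * (1.5 - 9) / Real.sqrt (100 + 1))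
        > stdNormalCDF (Real.sqrt k * (2 - 9) / Real.sqrt (20 + 1))
      ∧ P {ω | X ω > Y ω} > P {ω | X' ω > Y ω} := by
  have hgap : ((2 : ℝ) - 9) / √(20 + 1) < (1.5 - 9) / √(100 + 1) := by
    have h21 : √(21 : ℝ) < 5 := by rw [sqrt_lt' (by norm_num)]; norm_num
    have h101 : 10 < √(101 : ℝ) := by rw [lt_sqrt (by norm_num)]; norm_num
    rw [div_lt_div_iff₀ (by positivity) (by positivity)]
    norm_num
    linarith
  have hΦ : stdNormalCDF (√k * (2 - 9) / √(20 + 1)) < stdNormalCDF (√k * (1.5 - 9) / √(100 + 1)) :=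
    stdNormalCDF_strictMono <| by
      simpa only [mul_div_assoc] using mul_lt_mul_of_pos_left hgap (sqrt_pos.2 hk)
  have hv {a : ℝ} (ha : 0 < a) : (a / k).toNNReal + (1 / k).toNNReal ≠ 0 := by positivity
  refine ⟨hΦ, ?_⟩
  rw [gt_iff_lt, measure_lt_eq_stdNormalCDF_of_indepFun hXY hXd hYd (hv (by norm_num)),
    measure_lt_eq_stdNormalCDF_of_indepFun hX'Y hX'd hYd (hv (by norm_num)),
    div_sqrt_add_toNNReal_div _ hk (by norm_num) (by norm_num),
    div_sqrt_add_toNNReal_div _ hk (by norm_num) (by norm_num)]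
  exact (ENNReal.ofReal_lt_ofReal_iff_of_nonneg (cdf_nonneg _ _)).2 hΦ

/-- For every `k > 0`, `Φ(√k (1.5 − 9)/√(100 + 1)) > Φ(√k (2 − 9)/√(20 + 1))`.
Consequently, if agent 1's score is the sample mean of `k` Gaussian outcomes (so it is
distributed `N(1.5, 100/k)` under action `(1.5, 100)` and `N(2, 20/k)` under the natural
action `(2, 20)`), and agent 2's score is distributed `N(9, 1/k)` independently, then
agent 1's probability of achieving the higher score is strictly larger under `(1.5, 100)`
than under `(2, 20)`. -/
theorem stmt_1 (k : ℝ) (hk : 0 < k)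
    {Ω : Type*} [MeasurableSpace Ω] (P : Measure Ω) [IsProbabilityMeasure P]
    (X X' Y : Ω → ℝ) (hX : Measurable X) (hX' : Measurable X') (hY : Measurable Y)
    (hXY : IndepFun X Y P) (hX'Y : IndepFun X' Y P)
    (hXd : P.map X = gaussianReal 1.5 (100 / k).toNNReal)
    (hX'd : P.map X' = gaussianReal 2 (20 / k).toNNReal)
    (hYd : P.map Y = gaussianReal 9 (1 / k).toNNReal) :
    stdNormalCDF (Real.sqrt k * (1.5 - 9) / Real.sqrt (100 + 1))
        > stdNormalCDF (Real.sqrt k * (2 - 9) / Real.sqrt (20 + 1))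
      ∧ P {ω | X ω > Y ω} > P {ω | X' ω > Y ω} :=
  stmt_1_general k hk P X X' Y hXY hX'Y hXd hX'd hYd
end

section
/- (Multivariate delta method with a linear functional, the key step in the proof of Theorem 1.) Let (T_k) be a sequence of ℝⁿ-valued random vectors, θ ∈ ℝⁿ, and Σ a symmetric positive semidefinite n×n matrix, such that √k · (T_k − θ) converges in distribution to the n-variate Gaussian N(0, Σ). Let f : ℝ → ℝ be continuously differentiable, applied coordinatewise, let J = diag(f'(θ₁), …, f'(θₙ)), and let c ∈ ℝⁿ. Then √k · (cᵀ f(T_k) − cᵀ f(θ)) converges in distribution to the Gaussian N(0, cᵀ J Σ Jᵀ c). -/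
open MeasureTheory ProbabilityTheory Filter Real Matrix

/-- A sequence of random variables `X k : Ω → E` on `(Ω, P)` converges in distribution to the
probability measure `μ` on `E` if the expectations of every bounded continuous function
converge, i.e. the laws converge weakly to `μ`. -/
def TendstoInDistribution {Ω E : Type*} [MeasurableSpace Ω] [MeasurableSpace E]
    [TopologicalSpace E] (P : Measure Ω) (X : ℕ → Ω → E) (μ : Measure E) : Prop :=
  ∀ f : BoundedContinuousFunction E ℝ,
    Tendsto (fun k => ∫ ω, f (X k ω) ∂P) atTop (nhds (∫ x, f x ∂μ))

/-- `μ` is the centered multivariate Gaussian distribution `N(0, S)` on `ℝⁿ`: it is a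
probability measure all of whose one-dimensional linear projections `x ↦ cᵀ x` are
Gaussian `N(0, cᵀ S c)`. -/
def IsCenteredGaussian {n : ℕ} (μ : Measure (Fin n → ℝ)) (S : Matrix (Fin n) (Fin n) ℝ) :
    Prop :=
  IsProbabilityMeasure μ ∧
    ∀ c : Fin n → ℝ, μ.map (fun x => c ⬝ᵥ x) = gaussianReal 0 (c ⬝ᵥ S.mulVec c).toNNReal

/-!
Write `Z_k = √k (T_k − θ)`. Since `f t − f a = (t − a) · dslope f a t`, the statistic
`√k (cᵀ f(T_k) − cᵀ f(θ))` equals `G (Z_k, 1/√k)` for the map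
`G (z, s) = coordDslope f θ c (z, s) = ∑ᵢ cᵢ zᵢ · dslope f θᵢ (θᵢ + s zᵢ)`, which is jointly continuous because `f` is
differentiable, and satisfies `G (z, 0) = cᵀ J z`. By Slutsky's theorem `G (Z_k, 1/√k)`
converges in distribution to the law of `cᵀ J Z` with `Z ∼ N(0, Σ)`, which is
`N(0, cᵀ J Σ Jᵀ c)`.
-/

lemma tendstoInDistribution_map_iff {Ω Ω' E : Type*} [MeasurableSpace Ω] [MeasurableSpace Ω']
    [MeasurableSpace E] [TopologicalSpace E] [OpensMeasurableSpace E]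
    {P : Measure Ω} [IsProbabilityMeasure P] {μ : Measure Ω'} [IsProbabilityMeasure μ]
    {X : ℕ → Ω → E} {Z : Ω' → E} (hX : ∀ k, AEMeasurable (X k) P) (hZ : AEMeasurable Z μ) :
    _root_.TendstoInDistribution P X (μ.map Z) ↔
      MeasureTheory.TendstoInDistribution X atTop Z (fun _ => P) μ := by
  have hlaw : ∀ g : BoundedContinuousFunction E ℝ, ∫ x, g x ∂μ.map Z = ∫ a, g (Z a) ∂μ :=
    fun g => integral_map hZ g.continuous.aestronglyMeasurable
  have hlaws : ∀ (g : BoundedContinuousFunction E ℝ) k, ∫ x, g x ∂P.map (X k) = ∫ a, g (X k a) ∂P :=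
    fun g k => integral_map (hX k) g.continuous.aestronglyMeasurable
  constructor
  · intro h
    refine ⟨hX, hZ, ProbabilityMeasure.tendsto_iff_forall_integral_tendsto.2 fun g => ?_⟩
    simpa only [ProbabilityMeasure.coe_mk, hlaws, ← hlaw] using h g
  · intro h g
    simpa only [ProbabilityMeasure.coe_mk, hlaws, hlaw] using
      ProbabilityMeasure.tendsto_iff_forall_integral_tendsto.1 h.tendsto g

lemma IsCenteredGaussian.map_dotProduct_mulVec {m n : ℕ} {μ : Measure (Fin n → ℝ)}
    {S : Matrix (Fin n) (Fin n) ℝ} (hμ : IsCenteredGaussian μ S) (A : Matrix (Fin m) (Fin n) ℝ)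
    (c : Fin m → ℝ) :
    μ.map (fun x => c ⬝ᵥ A *ᵥ x) = gaussianReal 0 (c ⬝ᵥ (A * S * Aᵀ) *ᵥ c).toNNReal := by
  have hdot : (fun x => c ⬝ᵥ A *ᵥ x) = fun x => (Aᵀ *ᵥ c) ⬝ᵥ x := by
    ext x
    rw [dotProduct_mulVec, mulVec_transpose]
  rw [hdot, hμ.2, ← mulVec_mulVec, ← mulVec_mulVec, dotProduct_mulVec c A, ← mulVec_transpose]

-- `t` appears as `a + r⁻¹ * (r * (t - a))` so that the identity also holds at `r = 0`,
-- where `r⁻¹ = 0`.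
lemma mul_sub_eq_mul_dslope (f : ℝ → ℝ) (r a t : ℝ) :
    r * (f t - f a) = r * (t - a) * dslope f a (a + r⁻¹ * (r * (t - a))) := by
  rcases eq_or_ne r 0 with rfl | hr
  · simp
  · rw [inv_mul_cancel_left₀ hr, add_sub_cancel, mul_assoc, ← smul_eq_mul (t - a),
      sub_smul_dslope]

lemma continuous_dslope {f : ℝ → ℝ} (hf : Differentiable ℝ f) (a : ℝ) :
    Continuous (dslope f a) :=
  continuousOn_univ.1 <| (continuousOn_dslope univ_mem).2 ⟨hf.continuous.continuousOn, hf a⟩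

section CoordDslope

variable {ι : Type*} [Fintype ι] (f : ℝ → ℝ) (θ c : ι → ℝ)

noncomputable def coordDslope (p : (ι → ℝ) × ℝ) : ℝ :=
  c ⬝ᵥ fun i => p.1 i * dslope f (θ i) (θ i + p.2 * p.1 i)

variable {f} in
lemma continuous_coordDslope (hf : Differentiable ℝ f) : Continuous (coordDslope f θ c) := by
  unfold coordDslope dotProduct
  have := continuous_dslope hf
  fun_prop

lemma coordDslope_zero [DecidableEq ι] (z : ι → ℝ) :
    coordDslope f θ c (z, 0) = c ⬝ᵥ diagonal (fun i => deriv f (θ i)) *ᵥ z := by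
  simp only [coordDslope, zero_mul, add_zero, dslope_same]
  congr 1
  ext i
  rw [mulVec_diagonal, mul_comm]

lemma mul_sub_dotProduct_eq_coordDslope (r : ℝ) (t : ι → ℝ) :
    r * ((c ⬝ᵥ fun i => f (t i)) - c ⬝ᵥ fun i => f (θ i)) =
      coordDslope f θ c (fun i => r * (t i - θ i), r⁻¹) := by
  simp only [coordDslope, dotProduct, ← Finset.sum_sub_distrib, Finset.mul_sum, ← mul_sub,
    mul_left_comm r, mul_sub_eq_mul_dslope f r (θ _)]

end CoordDslope

theorem stmt_4_general {Ω : Type*} [MeasurableSpace Ω] (P : Measure Ω) [IsProbabilityMeasure P]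
    (n : ℕ) (T : ℕ → Ω → (Fin n → ℝ)) (hT : ∀ k, Measurable (T k))
    (θ : Fin n → ℝ) (S : Matrix (Fin n) (Fin n) ℝ)
    (μ : Measure (Fin n → ℝ)) (hμ : IsCenteredGaussian μ S)
    (h : TendstoInDistribution P (fun k ω i => Real.sqrt k * (T k ω i - θ i)) μ)
    (f : ℝ → ℝ) (hf : ContDiff ℝ 1 f) (c : Fin n → ℝ) :
    TendstoInDistribution P
      (fun k ω => Real.sqrt k * ((c ⬝ᵥ fun i => f (T k ω i)) - (c ⬝ᵥ fun i => f (θ i))))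
      (gaussianReal 0
        (c ⬝ᵥ ((Matrix.diagonal fun i => deriv f (θ i)) * S *
          (Matrix.diagonal fun i => deriv f (θ i))ᵀ).mulVec c).toNNReal) := by
  have : IsProbabilityMeasure μ := hμ.1
  have hZ : ∀ k : ℕ, AEMeasurable (fun ω i => √k * (T k ω i - θ i)) P := fun k => by
    have := hT k
    fun_prop
  have hZμ := (tendstoInDistribution_map_iff hZ aemeasurable_id).1 (by rwa [Measure.map_id])
  have hstep : TendstoInMeasure P (fun (k : ℕ) (_ : Ω) => (√k)⁻¹) atTop fun _ => 0 :=
    tendstoInMeasure_of_tendsto_ae (fun _ => aestronglyMeasurable_const) <| ae_of_all _ fun _ =>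
      tendsto_inv_atTop_zero.comp <| tendsto_sqrt_atTop.comp tendsto_natCast_atTop_atTop
  have hlim := hZμ.continuous_comp_prodMk_of_tendstoInMeasure_const
    (continuous_coordDslope θ c (hf.differentiable one_ne_zero)) hstep
    (fun _ => aemeasurable_const)
  rw [← hμ.map_dotProduct_mulVec]
  simp_rw [mul_sub_dotProduct_eq_coordDslope, ← coordDslope_zero]
  exact (tendstoInDistribution_map_iff hlim.forall_aemeasurable
    hlim.aemeasurable_limit).2 hlim

/-- Multivariate delta method with a linear functional: if `√k (T_k − θ) → N(0, Σ)` in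
distribution, `Σ` symmetric positive semidefinite, `f : ℝ → ℝ` is continuously
differentiable (applied coordinatewise), `J = diag(f'(θ₁), …, f'(θₙ))` and `c ∈ ℝⁿ`, then
`√k (cᵀ f(T_k) − cᵀ f(θ)) → N(0, cᵀ J Σ Jᵀ c)` in distribution. -/
theorem stmt_4 {Ω : Type*} [MeasurableSpace Ω] (P : Measure Ω) [IsProbabilityMeasure P]
    (n : ℕ) (T : ℕ → Ω → (Fin n → ℝ)) (hT : ∀ k, Measurable (T k))
    (θ : Fin n → ℝ) (S : Matrix (Fin n) (Fin n) ℝ) (hSsymm : S.IsSymm) (hSpsd : S.PosSemidef)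
    (μ : Measure (Fin n → ℝ)) (hμ : IsCenteredGaussian μ S)
    (h : TendstoInDistribution P (fun k ω i => Real.sqrt k * (T k ω i - θ i)) μ)
    (f : ℝ → ℝ) (hf : ContDiff ℝ 1 f) (c : Fin n → ℝ) :
    TendstoInDistribution P
      (fun k ω => Real.sqrt k * ((c ⬝ᵥ fun i => f (T k ω i)) - (c ⬝ᵥ fun i => f (θ i))))
      (gaussianReal 0
        (c ⬝ᵥ ((Matrix.diagonal fun i => deriv f (θ i)) * S *
          (Matrix.diagonal fun i => deriv f (θ i))ᵀ).mulVec c).toNNReal) :=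
  stmt_4_general P n T hT θ S μ hμ h f hf c
end

section
/- (Core of Theorem 2, exact-Gaussian form.) Let n ≥ 2, let c > 0, and let X₂, …, Xₙ be independent real random variables with X_j distributed as Gaussian N(m_j, c). For m ∈ ℝ let X₁(m) be a Gaussian N(m, c) random variable independent of X₂, …, Xₙ. Then the winning probability m ↦ P(X₁(m) > X_j for all j = 2, …, n) is strictly increasing in m. Consequently, if each action α of agent 1 yields a score distributed N(f(χ(α)), c) with variance c not depending on α, and arg max_α f(χ(α)) = arg max_α χ(α) = A⋆, then agent 1's probability of winning (having the strictly highest score) is maximized exactly at the natural action A⋆, regardless of the means m₂, …, mₙ chosen by the other agents. -/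
/-!
Conditioning on agent 1's score `x`, independence writes the winning probability as
`∫ ∏_{j ≠ 1} F_j(x) dN(μ, c)(x)`, where `F_j` is the CDF of `N(m_j, c)`. Each `F_j` is positive
and strictly increasing, hence so is the product; and since `N(μ, c)` is `N(0, c)` translated by
`μ`, raising `μ` raises the integrand pointwise. So the winning probability is strictly
increasing in the mean, and the action maximizing `f ∘ χ` maximizes it.
-/

open MeasureTheory ProbabilityTheory Real
open scoped ENNReal NNReal

lemma ProbabilityTheory.IndepFun.measure_preimage_eq_lintegral {Ω α β : Type*}
    [MeasurableSpace Ω] [MeasurableSpace α] [MeasurableSpace β] {P : Measure Ω}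
    [IsFiniteMeasure P] {f : Ω → α} {g : Ω → β} (hfg : IndepFun f g P) (hf : Measurable f)
    (hg : Measurable g) {S : Set (α × β)} (hS : MeasurableSet S) :
    P ((fun ω => (f ω, g ω)) ⁻¹' S) = ∫⁻ x, P.map g (Prod.mk x ⁻¹' S) ∂P.map f := by
  rw [← Measure.map_apply (hf.prodMk hg) hS,
    (indepFun_iff_map_prod_eq_prod_map_map hf.aemeasurable hg.aemeasurable).1 hfg,
    Measure.prod_apply hS]

lemma ProbabilityTheory.iIndepFun.measure_forall_lt_eq_lintegral {ι Ω : Type*} [Fintype ι]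
    [DecidableEq ι] [MeasurableSpace Ω] {P : Measure Ω} [IsProbabilityMeasure P]
    {X : ι → Ω → ℝ} (hX : ∀ i, Measurable (X i)) (hindep : iIndepFun X P) (i : ι) :
    P {ω | ∀ j, j ≠ i → X j ω < X i ω}
      = ∫⁻ x, ∏ j ∈ {i}ᶜ, P.map (X j) (Set.Iio x) ∂P.map (X i) := by
  let T : Finset ι := {i}ᶜ
  let Y : Ω → T → ℝ := fun ω j => X j ω
  have hY : Measurable Y := measurable_pi_lambda _ fun j => hX j
  have hXY : IndepFun (X i) Y P :=
    (hindep.indepFun_finset {i} T (by simp [T]) hX).comp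
      (measurable_pi_apply (⟨i, Finset.mem_singleton_self i⟩ : ({i} : Finset ι))) measurable_id
  let S : Set (ℝ × (T → ℝ)) := {p | ∀ j, p.2 j < p.1}
  have hS : MeasurableSet S := by
    simp only [S, Set.ofPred_forall]
    exact MeasurableSet.iInter fun j => measurableSet_lt measurable_snd.eval measurable_fst
  have hevent : {ω | ∀ j, j ≠ i → X j ω < X i ω} = (fun ω => (X i ω, Y ω)) ⁻¹' S := by
    ext ω
    simp [S, Y, T]
  rw [hevent, hXY.measure_preimage_eq_lintegral (hX i) hY hS]
  refine lintegral_congr fun x => ?_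
  have hsection : Prod.mk x ⁻¹' S = ⋂ j, (fun y : T → ℝ => y j) ⁻¹' Set.Iio x := by
    ext y
    simp [S]
  have hpreimage : Y ⁻¹' ⋂ j, (fun y : T → ℝ => y j) ⁻¹' Set.Iio x
      = ⋂ j ∈ T, X j ⁻¹' Set.Iio x := by
    ext ω
    simp [Y]
  rw [hsection, Measure.map_apply hY (MeasurableSet.iInter fun j =>
      measurable_pi_apply j measurableSet_Iio), hpreimage,
    hindep.measure_inter_preimage_eq_mul T (fun _ _ => measurableSet_Iio)]
  exact Finset.prod_congr rfl fun j _ => (Measure.map_apply (hX j) measurableSet_Iio).symm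

lemma strictMono_measure_Iio_of_absolutelyContinuous {μ : Measure ℝ} [IsFiniteMeasure μ]
    (hμ : volume ≪ μ) : StrictMono fun x => μ (Set.Iio x) := by
  intro a b hab
  have hIco : μ (Set.Ico a b) ≠ 0 := fun h => by
    simpa [Real.volume_Ico, hab.not_ge] using hμ h
  calc μ (Set.Iio a) < μ (Set.Iio a) + μ (Set.Ico a b) :=
        ENNReal.lt_add_right (measure_ne_top _ _) hIco
    _ = μ (Set.Iio b) := by
        rw [← measure_union ((Set.Iio_disjoint_Ici le_rfl).mono_right Set.Ico_subset_Ici_self)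
          measurableSet_Ico, Set.Iio_union_Ico_eq_Iio hab.le]

lemma ENNReal.strictMono_finset_prod {ι α : Type*} [Preorder α] [NoMinOrder α] {s : Finset ι}
    (hs : s.Nonempty) {F : ι → α → ℝ≥0∞} (hF : ∀ i ∈ s, StrictMono (F i))
    (hF_top : ∀ i ∈ s, ∀ x, F i x ≠ ∞) : StrictMono fun x => ∏ i ∈ s, F i x := by
  intro a b hab
  have hcoe : ∀ x, ∏ i ∈ s, F i x = ((∏ i ∈ s, (F i x).toNNReal : ℝ≥0) : ℝ≥0∞) := fun x => by
    rw [ENNReal.ofNNReal_finsetProd]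
    exact Finset.prod_congr rfl fun i hi => (ENNReal.coe_toNNReal (hF_top i hi x)).symm
  simp only [hcoe, ENNReal.coe_lt_coe]
  refine Finset.prod_lt_prod_of_nonempty (fun i hi => ?_) (fun i hi => ?_) hs
  · obtain ⟨a', ha'⟩ := exists_lt a
    exact ENNReal.toNNReal_pos (pos_of_gt (hF i hi ha')).ne' (hF_top i hi a)
  · exact (ENNReal.toNNReal_lt_toNNReal (hF_top i hi a) (hF_top i hi b)).2 (hF i hi hab)

lemma strictMono_lintegral_gaussianReal {v : ℝ≥0} {G : ℝ → ℝ≥0∞} (hG : StrictMono G)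
    {C : ℝ≥0∞} (hC : C ≠ ∞) (hGC : ∀ x, G x ≤ C) :
    StrictMono fun μ => ∫⁻ x, G x ∂gaussianReal μ v := by
  have hshift : ∀ μ, ∫⁻ x, G x ∂gaussianReal μ v = ∫⁻ x, G (x + μ) ∂gaussianReal 0 v := by
    intro μ
    rw [← lintegral_map hG.monotone.measurable (measurable_add_const μ),
      gaussianReal_map_add_const, zero_add]
  intro a b hab
  simp only [hshift]
  have hfin : ∫⁻ x, G (x + a) ∂gaussianReal 0 v ≠ ∞ :=
    ne_top_of_le_ne_top hC <| (lintegral_mono fun x => hGC _).trans_eq (by simp)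
  exact lintegral_strict_mono (IsProbabilityMeasure.ne_zero _)
    (hG.monotone.measurable.comp (measurable_add_const b)).aemeasurable hfin
    (ae_of_all _ fun x => hG (by linarith))

theorem stmt_11_general (n : ℕ) [NeZero n] (hn : 2 ≤ n) (c : ℝ) (hc : 0 < c)
    {Ω : Type*} [MeasurableSpace Ω] (P : Measure Ω) [IsProbabilityMeasure P]
    (X : ℝ → Fin n → Ω → ℝ) (m : Fin n → ℝ)
    (hmeas : ∀ μ i, Measurable (X μ i))
    (hindep : ∀ μ, iIndepFun (X μ) P)
    (hX0 : ∀ μ : ℝ, P.map (X μ 0) = gaussianReal μ c.toNNReal)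
    (hXj : ∀ μ : ℝ, ∀ j : Fin n, j ≠ 0 → P.map (X μ j) = gaussianReal (m j) c.toNNReal)
    {A : Type*} (χ : A → ℝ) (f : ℝ → ℝ) (Astar : A)
    (hfchi : ∀ α, f (χ α) ≤ f (χ Astar)) :
    StrictMono (fun μ : ℝ =>
        (P {ω | ∀ j : Fin n, j ≠ 0 → X μ 0 ω > X μ j ω}).toReal)
      ∧ ∀ α : A,
        P {ω | ∀ j : Fin n, j ≠ 0 → X (f (χ α)) 0 ω > X (f (χ α)) j ω}
          ≤ P {ω | ∀ j : Fin n, j ≠ 0 → X (f (χ Astar)) 0 ω > X (f (χ Astar)) j ω} := by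
  have hc' : c.toNNReal ≠ 0 := by simpa using hc
  let G : ℝ → ℝ≥0∞ := fun x => ∏ j ∈ {0}ᶜ, gaussianReal (m j) c.toNNReal (Set.Iio x)
  have hwin : ∀ μ, P {ω | ∀ j : Fin n, j ≠ 0 → X μ 0 ω > X μ j ω}
      = ∫⁻ x, G x ∂gaussianReal μ c.toNNReal := fun μ => by
    rw [← hX0 μ]
    refine ((hindep μ).measure_forall_lt_eq_lintegral (hmeas μ) 0).trans
      (lintegral_congr fun x => Finset.prod_congr rfl fun j hj => ?_)
    rw [hXj μ j (by simpa using hj)]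
  have hG : StrictMono G :=
    ENNReal.strictMono_finset_prod ⟨⟨1, hn⟩, by simp [Fin.ext_iff]⟩
      (fun j _ => strictMono_measure_Iio_of_absolutelyContinuous
        (gaussianReal_absolutelyContinuous' _ hc'))
      (fun _ _ _ => measure_ne_top _ _)
  have hstrict : StrictMono fun μ => P {ω | ∀ j : Fin n, j ≠ 0 → X μ 0 ω > X μ j ω} := by
    simp only [hwin]
    exact strictMono_lintegral_gaussianReal hG ENNReal.one_ne_top fun x =>
      Finset.prod_le_one' fun _ _ => prob_le_one
  exact ⟨fun a b hab => ENNReal.toReal_strict_mono (measure_ne_top _ _) (hstrict hab),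
    fun α => hstrict.monotone (hfchi α)⟩

/-- Core of Theorem 2, exact-Gaussian form. Agents are indexed by `Fin n` (`n ≥ 2`), agent 1
being index `0`. For each possible mean `μ` of agent 1, `X μ : Fin n → Ω → ℝ` is an
independent family of scores, with `X μ 0 ~ N(μ, c)` and `X μ j ~ N(m j, c)` for `j ≠ 0`,
all with the same variance `c > 0`. Then the winning probability
`μ ↦ P(X μ 0 > X μ j for all j ≠ 0)` is strictly increasing in `μ`. Consequently, if each
action `α` of agent 1 yields a score mean `f (χ α)` and
`arg max f ∘ χ = arg max χ = A⋆`, then agent 1's winning probability is maximized at the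
natural action `A⋆`, regardless of the other agents' means `m`. -/
theorem stmt_11 (n : ℕ) [NeZero n] (hn : 2 ≤ n) (c : ℝ) (hc : 0 < c)
    {Ω : Type*} [MeasurableSpace Ω] (P : Measure Ω) [IsProbabilityMeasure P]
    (X : ℝ → Fin n → Ω → ℝ) (m : Fin n → ℝ)
    (hmeas : ∀ μ i, Measurable (X μ i))
    (hindep : ∀ μ, iIndepFun (X μ) P)
    (hX0 : ∀ μ : ℝ, P.map (X μ 0) = gaussianReal μ c.toNNReal)
    (hXj : ∀ μ : ℝ, ∀ j : Fin n, j ≠ 0 → P.map (X μ j) = gaussianReal (m j) c.toNNReal)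
    {A : Type*} (χ : A → ℝ) (f : ℝ → ℝ) (Astar : A)
    (hchi : ∀ α, χ α ≤ χ Astar) (hfchi : ∀ α, f (χ α) ≤ f (χ Astar)) :
    StrictMono (fun μ : ℝ =>
        (P {ω | ∀ j : Fin n, j ≠ 0 → X μ 0 ω > X μ j ω}).toReal)
      ∧ ∀ α : A,
        P {ω | ∀ j : Fin n, j ≠ 0 → X (f (χ α)) 0 ω > X (f (χ α)) j ω}
          ≤ P {ω | ∀ j : Fin n, j ≠ 0 → X (f (χ Astar)) 0 ω > X (f (χ Astar)) j ω} :=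
  stmt_11_general n hn c hc P X m hmeas hindep hX0 hXj χ f Astar hfchi
end
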